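/- arXiv:2601.18232 — 3 statements merged into one kernel-verified Lean document; each statement's English description precedes it below -/
import Mathlib

section
/- Let n ≥ 1 and let θ be an n×n complex matrix. Then the partition sum of the double-edge normal factor graph N_DE(θ) equals |perm(θ)|²; explicitly, ∑_{x, x' ∈ {0,1}^{n×n}} (∏_{i=1}^n [row i of x contains exactly one 1]·[row i of x' contains exactly one 1]) · (∏_{j=1}^n [column j of x contains exactly one 1]·[column j of x' contains exactly one 1]) · ∏_{i,j=1}^n θ_{i,j}^{x_{i,j}} · conj(θ_{i,j})^{x'_{i,j}} = perm(θ) · conj(perm(θ)) = |perm(θ)|², where [·] denotes the Iverson bracket and z^0 := 1, z^1 := z. -/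
/-! A 0-1 matrix with exactly one `1` in every row and every column is the matrix of a unique
permutation, so the Iverson brackets cut the sum over all 0-1 matrices down to a sum over
permutations; the double sum over `(x, x')` factors into a product of two such sums, which
are `perm θ` and `conj (perm θ)`. -/

noncomputable def cperm {ι : Type*} [DecidableEq ι] [Fintype ι]
    (M : Matrix ι ι ℂ) : ℂ :=
  ∑ σ : Equiv.Perm ι, ∏ i, M i (σ i)

open Finset

namespace Equiv.Perm

variable {ι : Type*} [DecidableEq ι]

def toBoolMatrix (σ : Perm ι) : ι → ι → Bool := fun i j => decide (σ i = j)

theorem toBoolMatrix_injective : Function.Injective (toBoolMatrix (ι := ι)) := by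
  intro σ τ h
  ext i
  simpa [toBoolMatrix, eq_comm] using congrFun (congrFun h i) (σ i)

variable [Fintype ι]

theorem card_filter_toBoolMatrix_row (σ : Perm ι) (i : ι) :
    #{j | σ.toBoolMatrix i j = true} = 1 :=
  card_eq_one.mpr ⟨σ i, by ext j; simp [toBoolMatrix, eq_comm]⟩

theorem card_filter_toBoolMatrix_col (σ : Perm ι) (j : ι) :
    #{i | σ.toBoolMatrix i j = true} = 1 :=
  card_eq_one.mpr ⟨σ.symm j, by ext i; simp [toBoolMatrix, eq_symm_apply]⟩

theorem exists_toBoolMatrix_eq {x : ι → ι → Bool} (hrow : ∀ i, #{j | x i j = true} = 1)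
    (hcol : ∀ j, #{i | x i j = true} = 1) : ∃ σ : Perm ι, σ.toBoolMatrix = x := by
  choose g hg using fun i => card_eq_one.mp (hrow i)
  have hxg : ∀ i j, x i j = true ↔ g i = j := fun i j => by
    simpa only [mem_filter, mem_univ, true_and, mem_singleton, eq_comm (a := j)] using
      Finset.ext_iff.mp (hg i) j
  have hg_inj : Function.Injective g := fun i₁ i₂ h =>
    card_le_one.mp (hcol (g i₁)).le _ (by simp [hxg]) _ (by simp [hxg, h])
  refine ⟨Equiv.ofBijective g (Finite.injective_iff_bijective.mp hg_inj), ?_⟩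
  ext i j
  rw [Bool.eq_iff_iff, hxg]
  simp [toBoolMatrix]

end Equiv.Perm

section BoolMatrix

variable {ι R : Type*} [Fintype ι] [DecidableEq ι] [CommSemiring R]

theorem sum_rowCol_indicator_mul_eq_sum_perm (g : (ι → ι → Bool) → R) :
    ∑ x : ι → ι → Bool,
      (∏ i, if #{j | x i j = true} = 1 then (1 : R) else 0) *
      (∏ j, if #{i | x i j = true} = 1 then (1 : R) else 0) * g x
      = ∑ σ : Equiv.Perm ι, g σ.toBoolMatrix := by
  have hsupport : ({x | (∀ i, #{j | x i j = true} = 1) ∧ ∀ j, #{i | x i j = true} = 1} :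
      Finset (ι → ι → Bool)) = univ.image Equiv.Perm.toBoolMatrix := by
    ext x
    simp only [mem_filter, mem_univ, true_and, mem_image]
    refine ⟨fun ⟨hrow, hcol⟩ => Equiv.Perm.exists_toBoolMatrix_eq hrow hcol, ?_⟩
    rintro ⟨σ, -, rfl⟩
    exact ⟨σ.card_filter_toBoolMatrix_row, σ.card_filter_toBoolMatrix_col⟩
  simp only [prod_boole, mem_univ, true_implies, ← ite_and, ite_mul, one_mul, zero_mul]
  rw [← sum_filter, hsupport, sum_image Equiv.Perm.toBoolMatrix_injective.injOn]

theorem prod_ite_toBoolMatrix (f : ι → ι → R) (σ : Equiv.Perm ι) :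
    ∏ i, ∏ j, (if σ.toBoolMatrix i j = true then f i j else 1) = ∏ i, f i (σ i) := by
  simp [Equiv.Perm.toBoolMatrix, prod_ite_eq]

theorem sum_rowCol_indicator_mul_prod_eq_sum_perm (f : ι → ι → R) :
    ∑ x : ι → ι → Bool,
      (∏ i, if #{j | x i j = true} = 1 then (1 : R) else 0) *
      (∏ j, if #{i | x i j = true} = 1 then (1 : R) else 0) *
      (∏ i, ∏ j, if x i j = true then f i j else 1)
      = ∑ σ : Equiv.Perm ι, ∏ i, f i (σ i) := by
  simp only [sum_rowCol_indicator_mul_eq_sum_perm, prod_ite_toBoolMatrix]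

end BoolMatrix

theorem partition_sum_DENFG_eq_abs_sq_permanent_general (n : ℕ)
    (θ : Matrix (Fin n) (Fin n) ℂ) :
    (∑ x : Fin n → Fin n → Bool, ∑ x' : Fin n → Fin n → Bool,
      (∏ i : Fin n,
        (if (Finset.univ.filter fun j : Fin n => x i j = true).card = 1
          then (1 : ℂ) else 0) *
        (if (Finset.univ.filter fun j : Fin n => x' i j = true).card = 1
          then (1 : ℂ) else 0)) *
      (∏ j : Fin n,
        (if (Finset.univ.filter fun i : Fin n => x i j = true).card = 1
          then (1 : ℂ) else 0) *
        (if (Finset.univ.filter fun i : Fin n => x' i j = true).card = 1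
          then (1 : ℂ) else 0)) *
      (∏ i : Fin n, ∏ j : Fin n,
        (if x i j = true then θ i j else 1) *
        (if x' i j = true then (starRingEnd ℂ) (θ i j) else 1))
      = cperm θ * (starRingEnd ℂ) (cperm θ))
    ∧ cperm θ * (starRingEnd ℂ) (cperm θ) = ((‖cperm θ‖ : ℝ) ^ 2 : ℂ) := by
  refine ⟨?_, by rw [Complex.mul_conj, ← Complex.sq_norm]; push_cast; rfl⟩
  have hconj : starRingEnd ℂ (cperm θ) =
      ∑ σ : Equiv.Perm (Fin n), ∏ i, starRingEnd ℂ (θ i (σ i)) := by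
    simp only [cperm, map_sum, map_prod]
  rw [hconj, cperm, ← sum_rowCol_indicator_mul_prod_eq_sum_perm θ,
    ← sum_rowCol_indicator_mul_prod_eq_sum_perm (fun i j => starRingEnd ℂ (θ i j)),
    sum_mul_sum]
  refine sum_congr rfl fun x _ => sum_congr rfl fun x' _ => ?_
  simp only [prod_mul_distrib]
  ring

/-- The partition sum of the DE-NFG `N_DE(θ)` equals `perm(θ) * conj(perm(θ)) = |perm(θ)|²`. -/
theorem partition_sum_DENFG_eq_abs_sq_permanent (n : ℕ) (hn : 1 ≤ n)
    (θ : Matrix (Fin n) (Fin n) ℂ) :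
    (∑ x : Fin n → Fin n → Bool, ∑ x' : Fin n → Fin n → Bool,
      (∏ i : Fin n,
        (if (Finset.univ.filter fun j : Fin n => x i j = true).card = 1
          then (1 : ℂ) else 0) *
        (if (Finset.univ.filter fun j : Fin n => x' i j = true).card = 1
          then (1 : ℂ) else 0)) *
      (∏ j : Fin n,
        (if (Finset.univ.filter fun i : Fin n => x i j = true).card = 1
          then (1 : ℂ) else 0) *
        (if (Finset.univ.filter fun i : Fin n => x' i j = true).card = 1
          then (1 : ℂ) else 0)) *
      (∏ i : Fin n, ∏ j : Fin n,
        (if x i j = true then θ i j else 1) *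
        (if x' i j = true then (starRingEnd ℂ) (θ i j) else 1))
      = cperm θ * (starRingEnd ℂ) (cperm θ))
    ∧ cperm θ * (starRingEnd ℂ) (cperm θ) = ((‖cperm θ‖ : ℝ) ^ 2 : ℂ) :=
  partition_sum_DENFG_eq_abs_sq_permanent_general n θ
end

section
/- Let n ≥ 1 and let σ₁, σ₂ ∈ S_n. Then the number of pairs (τ₁, τ₂) ∈ S_n × S_n such that {τ₁(i), τ₂(i)} = {σ₁(i), σ₂(i)} (as sets) for every i ∈ {1,…,n} is exactly 2^{c(σ₁σ₂⁻¹)}, where c(σ) denotes the number of cycles of length at least 2 in the cycle decomposition of σ. -/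
/-!
Put `π = σ₁ σ₂⁻¹` and `β = τ₂ σ₂⁻¹`. Reading the condition at the point `x = σ₂ i`, it says
that `β` either fixes `x` or sends it to `π x`, and that then `τ₁ = β⁻¹ σ₁` is forced.
The permutations `β` agreeing with `π` wherever they move a point are exactly the products of
a subset of the cycles of `π`, so there are `2 ^ c(π)` of them.
-/

open Finset

theorem Finset.pair_left_injective {α : Type*} [DecidableEq α] (b : α) :
    Function.Injective fun a : α => ({a, b} : Finset α) := by
  intro a a' h
  simp only [← Finset.coe_inj, Finset.coe_pair, Set.pair_eq_pair_iff] at h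
  grind

namespace Equiv.Perm

variable {α : Type*}

def IsSubperm (β π : Perm α) : Prop :=
  ∀ x, β x = x ∨ β x = π x

instance [Fintype α] [DecidableEq α] (β π : Perm α) : Decidable (IsSubperm β π) :=
  inferInstanceAs (Decidable (∀ x, β x = x ∨ β x = π x))

theorem IsSubperm.apply_apply_eq_of_apply_eq {β π : Perm α} (h : IsSubperm β π) {x : α}
    (hx : β x = x) : β (π x) = π x := by
  obtain ⟨y, hy⟩ := β.surjective (π x)
  rcases h y with hβy | hβy
  · rw [← hy, hβy, hβy]
  · have hyx : y = x := π.injective (hβy.symm.trans hy)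
    subst hyx
    rw [← hβy, hx, hx]

theorem isSubperm_iff_cycleFactorsFinset_subset [Fintype α] [DecidableEq α] {β π : Perm α} :
    IsSubperm β π ↔ β.cycleFactorsFinset ⊆ π.cycleFactorsFinset := by
  constructor
  · intro h c hc
    obtain ⟨hcyc, hcβ⟩ := mem_cycleFactorsFinset_iff.mp hc
    refine mem_cycleFactorsFinset_iff.mpr ⟨hcyc, fun a ha => ?_⟩
    have hβa : β a ≠ a := mem_support.mp (mem_cycleFactorsFinset_support_le hc ha)
    exact (hcβ a ha).trans ((h a).resolve_left hβa)
  · intro h x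
    by_cases hx : β x = x
    · exact Or.inl hx
    · have hx' : x ∈ β.support := mem_support.mpr hx
      have hmem := h (cycleOf_mem_cycleFactorsFinset_iff.mpr hx')
      have hxc : x ∈ (β.cycleOf x).support := mem_support_cycleOf_iff.mpr ⟨SameCycle.refl _ _, hx'⟩
      exact Or.inr ((cycleOf_apply_self β x).symm.trans
        ((mem_cycleFactorsFinset_iff.mp hmem).2 x hxc))

theorem card_isSubperm [Fintype α] [DecidableEq α] (π : Perm α) :
    #{β : Perm α | IsSubperm β π} = 2 ^ #π.cycleFactorsFinset := by
  rw [← card_powerset]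
  refine card_nbij cycleFactorsFinset (fun β hβ => ?_) cycleFactorsFinset_injective.injOn
    (fun C hC => ?_)
  · simpa [isSubperm_iff_cycleFactorsFinset_subset] using hβ
  · have hC : C ⊆ π.cycleFactorsFinset := mem_powerset.mp hC
    have hdisj := (cycleFactorsFinset_pairwise_disjoint π).mono hC
    have hβ : (C.noncommProd id (hdisj.mono' fun _ _ => Disjoint.commute)).cycleFactorsFinset = C :=
      cycleFactorsFinset_eq_finset.mpr
        ⟨fun f hf => (mem_cycleFactorsFinset_iff.mp (hC hf)).1, hdisj, rfl⟩
    refine ⟨_, ?_, hβ⟩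
    simpa only [coe_filter, mem_univ, true_and, Set.mem_ofPred_eq,
      isSubperm_iff_cycleFactorsFinset_subset, hβ] using hC

theorem card_cycleType_eq_card_cycleFactorsFinset [Fintype α] [DecidableEq α] (σ : Perm α) :
    Multiset.card σ.cycleType = #σ.cycleFactorsFinset := by
  rw [cycleType_def, Multiset.card_map]
  rfl

section SameEdges

variable [DecidableEq α] {σ₁ σ₂ τ₁ τ₂ : Perm α}

theorem isSubperm_mul_inv_of_pair_eq (h : ∀ i, ({τ₁ i, τ₂ i} : Finset α) = {σ₁ i, σ₂ i}) :
    IsSubperm (τ₂ * σ₂⁻¹) (σ₁ * σ₂⁻¹) := by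
  intro x
  have hmem : τ₂ (σ₂⁻¹ x) ∈ ({σ₁ (σ₂⁻¹ x), σ₂ (σ₂⁻¹ x)} : Finset α) := by
    rw [← h]
    exact mem_insert_of_mem (mem_singleton_self _)
  simp only [mem_insert, mem_singleton, coe_inv, apply_symm_apply] at hmem
  simp only [mul_apply, coe_inv]
  tauto

theorem pair_eq_of_isSubperm {β : Perm α} (hβ : IsSubperm β (σ₁ * σ₂⁻¹)) (i : α) :
    ({(β⁻¹ * σ₁) i, (β * σ₂) i} : Finset α) = {σ₁ i, σ₂ i} := by
  have hσ₁ : σ₁ i = (σ₁ * σ₂⁻¹) (σ₂ i) := by simp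
  rcases hβ (σ₂ i) with hx | hx
  · have hfix : β (σ₁ i) = σ₁ i := hσ₁ ▸ hβ.apply_apply_eq_of_apply_eq hx
    rw [mul_apply, mul_apply, hx, inv_eq_iff_eq.mpr hfix.symm]
  · rw [mul_apply, mul_apply, hx, ← hσ₁, inv_eq_iff_eq.mpr (hx.trans hσ₁.symm).symm, pair_comm]

theorem eq_of_pair_eq_pair (h : ∀ i, ({τ₁ i, τ₂ i} : Finset α) = {σ₁ i, σ₂ i})
    {τ₁' : Perm α} (h' : ∀ i, ({τ₁' i, τ₂ i} : Finset α) = {σ₁ i, σ₂ i}) : τ₁ = τ₁' :=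
  Equiv.ext fun i => pair_left_injective _ ((h i).trans (h' i).symm)

end SameEdges

theorem card_pairs_eq_two_pow_card_cycleFactorsFinset [Fintype α] [DecidableEq α]
    (σ₁ σ₂ : Perm α) :
    #{τ : Perm α × Perm α | ∀ i, ({τ.1 i, τ.2 i} : Finset α) = {σ₁ i, σ₂ i}} =
      2 ^ #(σ₁ * σ₂⁻¹).cycleFactorsFinset := by
  rw [← card_isSubperm]
  refine card_nbij' (fun τ => τ.2 * σ₂⁻¹) (fun β => (β⁻¹ * σ₁, β * σ₂)) ?_ ?_ ?_ ?_
  · intro τ hτ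
    simp only [coe_filter, mem_univ, true_and, Set.mem_ofPred_eq] at hτ ⊢
    exact isSubperm_mul_inv_of_pair_eq hτ
  · intro β hβ
    simp only [coe_filter, mem_univ, true_and, Set.mem_ofPred_eq] at hβ ⊢
    exact pair_eq_of_isSubperm hβ
  · intro τ hτ
    simp only [coe_filter, mem_univ, true_and, Set.mem_ofPred_eq] at hτ
    have h := pair_eq_of_isSubperm (isSubperm_mul_inv_of_pair_eq hτ)
    rw [inv_mul_cancel_right] at h
    exact Prod.ext (eq_of_pair_eq_pair h hτ) (inv_mul_cancel_right _ _)
  · intro β _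
    exact mul_inv_cancel_right β σ₂

end Equiv.Perm

theorem card_pairs_same_edge_sets_general (n : ℕ)
    (σ₁ σ₂ : Equiv.Perm (Fin n)) :
    (Finset.univ.filter
        (fun τ : Equiv.Perm (Fin n) × Equiv.Perm (Fin n) =>
          ∀ i : Fin n, ({τ.1 i, τ.2 i} : Finset (Fin n)) = {σ₁ i, σ₂ i})).card
    = 2 ^ ((σ₁ * σ₂⁻¹).cycleType.card) := by
  rw [Equiv.Perm.card_cycleType_eq_card_cycleFactorsFinset]
  -- `convert` reconciles the two `Decidable` instances of `∀ i : Fin n` used by the filters.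
  convert Equiv.Perm.card_pairs_eq_two_pow_card_cycleFactorsFinset σ₁ σ₂

/-- The number of pairs `(τ₁, τ₂)` with `{τ₁ i, τ₂ i} = {σ₁ i, σ₂ i}` for all `i`
is `2 ^ c(σ₁ σ₂⁻¹)`, where `c` counts cycles of length at least 2. -/
theorem card_pairs_same_edge_sets (n : ℕ) (hn : 1 ≤ n)
    (σ₁ σ₂ : Equiv.Perm (Fin n)) :
    (Finset.univ.filter
        (fun τ : Equiv.Perm (Fin n) × Equiv.Perm (Fin n) =>
          ∀ i : Fin n, ({τ.1 i, τ.2 i} : Finset (Fin n)) = {σ₁ i, σ₂ i})).card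
    = 2 ^ ((σ₁ * σ₂⁻¹).cycleType.card) :=
  card_pairs_same_edge_sets_general n σ₁ σ₂
end

section
/- Let n ≥ 1 and let a, u, v be complex numbers. Then ∑_{σ∈S_n} ( ∏_{ℓ=2}^n (2u^ℓ)^{c_ℓ(σ)} ) · ( ∑_{ρ ∈ Perm(Fix(σ))} a^{c_1(ρ)} ∏_{ℓ=2}^{|Fix(σ)|} (v^ℓ)^{c_ℓ(ρ)} ) = ∑_{τ∈S_n} a^{c_1(τ)} · ∏_{ℓ=2}^n (2u^ℓ + v^ℓ)^{c_ℓ(τ)}, where Fix(σ) := {i ∈ {1,…,n} : σ(i) = i}, Perm(Fix(σ)) is the set of all permutations of the set Fix(σ), and for ρ ∈ Perm(Fix(σ)), c_ℓ(ρ) counts the cycles of length ℓ of ρ. -/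
/-!
A permutation `ρ` of `Fix(σ)` is the same as a permutation of `{1,…,n}` disjoint from `σ`, and a
pair of disjoint permutations `(σ, ρ)` is the same as a permutation `τ = σρ` together with a
subset of its cycles (those of `σ`). Both sides weight a cycle of length `ℓ` by `2uˡ` or `vˡ`
according to that subset and give `a` per fixed point of `τ`, so summing over the subsets
expands `∏ (2uˡ + vˡ)`.
-/

open Finset

namespace Equiv.Perm

variable {α : Type*} [Fintype α] [DecidableEq α]

instance : DecidableRel (Disjoint : Perm α → Perm α → Prop) :=
  fun _ _ => Fintype.decidableForallFintype

theorem prod_Icc_pow_count_cycleType {M : Type*} [CommMonoid M] (π : Perm α) (w : ℕ → M)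
    {n : ℕ} (hn : Fintype.card α ≤ n) :
    ∏ ℓ ∈ Icc 2 n, w ℓ ^ π.cycleType.count ℓ = (π.cycleType.map w).prod := by
  rw [prod_multiset_map_count]
  refine (prod_subset (fun ℓ hℓ => ?_) fun ℓ _ hℓ => ?_).symm
  · rw [Multiset.mem_toFinset] at hℓ
    exact mem_Icc.mpr ⟨two_le_of_mem_cycleType hℓ,
      (le_card_support_of_mem_cycleType hℓ).trans (π.support.card_le_univ.trans hn)⟩
  · rw [Multiset.count_eq_zero_of_notMem (Multiset.mem_toFinset.not.mp hℓ), pow_zero]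

theorem prod_map_cycleType {M : Type*} [CommMonoid M] (π : Perm α) (w : ℕ → M) :
    (π.cycleType.map w).prod = ∏ c ∈ π.cycleFactorsFinset, w #c.support := by
  rw [cycleType_def, Multiset.map_map]
  rfl

theorem card_filter_apply_eq_ofSubtype {p : α → Prop} [DecidablePred p] (ρ : Perm (Subtype p)) :
    #{x | ρ x = x} = #{x | p x ∧ ofSubtype ρ x = x} := by
  rw [← Fintype.card_subtype, ← Fintype.card_subtype]
  refine Fintype.card_congr ((Equiv.subtypeEquivRight fun x => ?_).trans
    (Equiv.subtypeSubtypeEquivSubtypeInter p fun x => ofSubtype ρ x = x))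
  rw [ofSubtype_apply_of_mem ρ x.2, Subtype.ext_iff]

theorem card_filter_apply_eq_mul_ofSubtype (σ : Perm α) (ρ : Perm {x // σ x = x}) :
    #{x | ρ x = x} = #{x | (σ * ofSubtype ρ) x = x} := by
  rw [card_filter_apply_eq_ofSubtype]
  refine congrArg card (filter_congr fun x _ => ?_)
  exact ((disjoint_ofSubtype_of_memFixedPoints_self ρ).symm.mul_apply_eq_iff).symm

theorem sum_ofSubtype_eq_sum_disjoint {R : Type*} [AddCommMonoid R] (σ : Perm α)
    (G : Perm α → R) :
    ∑ ρ : Perm {x // σ x = x}, G (ofSubtype ρ) = ∑ ρ ∈ {ρ | σ.Disjoint ρ}, G ρ := by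
  refine (Fintype.sum_equiv (Perm.subtypeEquivSubtypePerm _) _ _ fun _ => rfl).trans
    (sum_subtype _ (fun ρ => ?_) G).symm
  exact (mem_filter_univ ρ).trans (forall_congr' fun _ => or_iff_not_imp_left)

section SubsetCycleFactors

variable {τ : Perm α} {S T : Finset (Perm α)}

theorem pairwise_disjoint_of_subset_cycleFactorsFinset (hS : S ⊆ τ.cycleFactorsFinset) :
    (S : Set (Perm α)).Pairwise Disjoint :=
  τ.cycleFactorsFinset_pairwise_disjoint.mono (coe_subset.mpr hS)

theorem pairwise_commute_of_subset_cycleFactorsFinset (hS : S ⊆ τ.cycleFactorsFinset) :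
    (S : Set (Perm α)).Pairwise Commute :=
  (pairwise_disjoint_of_subset_cycleFactorsFinset hS).mono' fun _ _ => Disjoint.commute

theorem cycleFactorsFinset_noncommProd_of_subset (hS : S ⊆ τ.cycleFactorsFinset) :
    (S.noncommProd id (pairwise_commute_of_subset_cycleFactorsFinset hS)).cycleFactorsFinset
      = S :=
  cycleFactorsFinset_eq_finset.mpr ⟨fun _ hf => (mem_cycleFactorsFinset_iff.mp (hS hf)).1,
    pairwise_disjoint_of_subset_cycleFactorsFinset hS, rfl⟩

theorem disjoint_noncommProd_of_subset (hS : S ⊆ τ.cycleFactorsFinset)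
    (hT : T ⊆ τ.cycleFactorsFinset) (hST : _root_.Disjoint S T) :
    (S.noncommProd id (pairwise_commute_of_subset_cycleFactorsFinset hS)).Disjoint
      (T.noncommProd id (pairwise_commute_of_subset_cycleFactorsFinset hT)) :=
  disjoint_noncommProd_right _ fun d hd => Disjoint.symm <| disjoint_noncommProd_right _
    fun c hc => τ.cycleFactorsFinset_pairwise_disjoint (hT hd) (hS hc)
      fun h => disjoint_left.mp hST hc (by simpa [h] using hd)

theorem noncommProd_mul_noncommProd_sdiff (hS : S ⊆ τ.cycleFactorsFinset) :
    S.noncommProd id (pairwise_commute_of_subset_cycleFactorsFinset hS) *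
      (τ.cycleFactorsFinset \ S).noncommProd id
        (pairwise_commute_of_subset_cycleFactorsFinset sdiff_subset) = τ := by
  rw [← noncommProd_union_of_disjoint disjoint_sdiff _
    (by rw [union_sdiff_of_subset hS]; exact τ.cycleFactorsFinset_mem_commute)]
  simp only [union_sdiff_of_subset hS]
  exact cycleFactorsFinset_noncommProd τ _

end SubsetCycleFactors

theorem Disjoint.cycleFactorsFinset_mul_sdiff {σ ρ : Perm α} (h : σ.Disjoint ρ) :
    (σ * ρ).cycleFactorsFinset \ σ.cycleFactorsFinset = ρ.cycleFactorsFinset := by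
  rw [h.cycleFactorsFinset_mul_eq_union, union_sdiff_cancel_left h.disjoint_cycleFactorsFinset]

theorem sum_sum_disjoint_eq_sum_prod_add {R : Type*} [CommSemiring R] (F f g : Perm α → R) :
    ∑ σ : Perm α, ∑ ρ ∈ {ρ | σ.Disjoint ρ},
        F (σ * ρ) * (∏ c ∈ σ.cycleFactorsFinset, f c) * ∏ c ∈ ρ.cycleFactorsFinset, g c
      = ∑ τ : Perm α, F τ * ∏ c ∈ τ.cycleFactorsFinset, (f c + g c) := by
  simp_rw [prod_add, mul_sum]
  refine (sum_sigma' _ _ _).trans (Eq.trans ?_ (sum_sigma' _ _ _).symm)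
  have disj {x : Σ _ : Perm α, Perm α} (hx : x ∈ univ.sigma fun σ => {ρ | σ.Disjoint ρ}) :
      x.1.Disjoint x.2 := by
    simpa only [mem_filter, mem_univ, true_and] using (mem_sigma.mp hx).2
  have sub {y : Σ _ : Perm α, Finset (Perm α)}
      (hy : y ∈ univ.sigma fun τ => τ.cycleFactorsFinset.powerset) :
      y.2 ⊆ y.1.cycleFactorsFinset := mem_powerset.mp (mem_sigma.mp hy).2
  refine sum_bij'
    (fun x _ => ⟨x.1 * x.2, x.1.cycleFactorsFinset⟩)
    (fun y hy => ⟨y.2.noncommProd id (pairwise_commute_of_subset_cycleFactorsFinset (sub hy)),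
      (y.1.cycleFactorsFinset \ y.2).noncommProd id
        (pairwise_commute_of_subset_cycleFactorsFinset sdiff_subset)⟩)
    (fun x hx => ?_) (fun y hy => ?_) (fun x hx => ?_) (fun y hy => ?_) (fun x hx => ?_)
  · simp only [mem_sigma, mem_univ, mem_powerset, true_and,
      (disj hx).cycleFactorsFinset_mul_eq_union, subset_union_left]
  · simp only [mem_sigma, mem_univ, mem_filter, true_and]
    exact disjoint_noncommProd_of_subset (sub hy) sdiff_subset disjoint_sdiff
  · refine Sigma.ext (cycleFactorsFinset_noncommProd _) (heq_of_eq ?_)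
    simp only [(disj hx).cycleFactorsFinset_mul_sdiff]
    exact cycleFactorsFinset_noncommProd _
  · exact Sigma.ext (noncommProd_mul_noncommProd_sdiff (sub hy))
      (heq_of_eq (cycleFactorsFinset_noncommProd_of_subset (sub hy)))
  · simp only [(disj hx).cycleFactorsFinset_mul_sdiff, mul_assoc]

end Equiv.Perm

open Equiv Equiv.Perm

theorem cycle_index_reorganization_general (n : ℕ) (a u v : ℂ) :
    ∑ σ : Equiv.Perm (Fin n),
      (∏ ℓ ∈ Finset.Icc 2 n, (2 * u ^ ℓ) ^ (σ.cycleType.count ℓ)) *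
      (∑ ρ : Equiv.Perm {i : Fin n // σ i = i},
        a ^ (Finset.univ.filter fun i : {i : Fin n // σ i = i} => ρ i = i).card *
          ∏ ℓ ∈ Finset.Icc 2 (Fintype.card {i : Fin n // σ i = i}),
            (v ^ ℓ) ^ (ρ.cycleType.count ℓ))
    = ∑ τ : Equiv.Perm (Fin n),
        a ^ (Finset.univ.filter fun i : Fin n => τ i = i).card *
          ∏ ℓ ∈ Finset.Icc 2 n, (2 * u ^ ℓ + v ^ ℓ) ^ (τ.cycleType.count ℓ) := by
  have hn : Fintype.card (Fin n) ≤ n := (Fintype.card_fin n).le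
  calc _ = ∑ σ : Perm (Fin n), ∑ ρ ∈ {ρ | σ.Disjoint ρ},
        a ^ #{i | (σ * ρ) i = i} * (∏ c ∈ σ.cycleFactorsFinset, 2 * u ^ #c.support) *
          ∏ c ∈ ρ.cycleFactorsFinset, v ^ #c.support := by
        refine sum_congr rfl fun σ _ => ?_
        rw [prod_Icc_pow_count_cycleType σ _ hn, prod_map_cycleType, mul_sum,
          ← sum_ofSubtype_eq_sum_disjoint]
        refine sum_congr rfl fun ρ _ => ?_
        rw [card_filter_apply_eq_mul_ofSubtype, prod_Icc_pow_count_cycleType ρ _ le_rfl,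
          ← cycleType_ofSubtype, prod_map_cycleType]
        ring
    _ = _ := by
        refine (sum_sum_disjoint_eq_sum_prod_add (fun τ => a ^ #{i | τ i = i})
          (fun c => 2 * u ^ #c.support) fun c => v ^ #c.support).trans
          (sum_congr rfl fun τ _ => ?_)
        rw [prod_Icc_pow_count_cycleType τ _ hn, prod_map_cycleType]

/-- Reorganizing the double sum over permutations of `{1,…,n}` together with
permutations of the fixed-point set into a single cycle-index expression. -/
theorem cycle_index_reorganization (n : ℕ) (hn : 1 ≤ n) (a u v : ℂ) :
    ∑ σ : Equiv.Perm (Fin n),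
      (∏ ℓ ∈ Finset.Icc 2 n, (2 * u ^ ℓ) ^ (σ.cycleType.count ℓ)) *
      (∑ ρ : Equiv.Perm {i : Fin n // σ i = i},
        a ^ (Finset.univ.filter fun i : {i : Fin n // σ i = i} => ρ i = i).card *
          ∏ ℓ ∈ Finset.Icc 2 (Fintype.card {i : Fin n // σ i = i}),
            (v ^ ℓ) ^ (ρ.cycleType.count ℓ))
    = ∑ τ : Equiv.Perm (Fin n),
        a ^ (Finset.univ.filter fun i : Fin n => τ i = i).card *
          ∏ ℓ ∈ Finset.Icc 2 n, (2 * u ^ ℓ + v ^ ℓ) ^ (τ.cycleType.count ℓ) :=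
  cycle_index_reorganization_general n a u v
end
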